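/- Let a ∈ ℂ[X] have degree at most 4 and satisfy λ⁴·conj(a(1/conj(λ))) = a(λ) for all λ ≠ 0, with a(−1) a positive real number, and let â ∈ ℂ[X] satisfy â(κ) = ((i + κ)⁴ / a(−1)) · a((i − κ)/(i + κ)) for all κ ≠ −i. Then for all λ, ν ∈ ℂ with λ ≠ −1 and ν² = λ·a(λ), setting κ = (λ − 1)/(i(λ + 1)) and ν̂ = i·(i + κ)³·ν / √(a(−1)), one has ν̂² = (κ² + 1)·â(κ). -/

import Mathlib

open Polynomial Complex

/-!
Writing `κ` for the Cayley transform of `λ`, one has `i + κ = 2i/(λ+1)` and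
`i − κ = 2iλ/(λ+1)`. Hence `(i − κ)/(i + κ) = λ`, so `â(κ) = (i+κ)⁴ a(λ)/a(−1)`, and
`κ² + 1 = −(i + κ)(i − κ) = −λ(i + κ)²`. Both sides of the claimed identity therefore
equal `−(i + κ)⁶ λ a(λ)/a(−1)`.
-/

noncomputable def cayley (l : ℂ) : ℂ := (l - 1) / (I * (l + 1))

section Cayley

variable {l : ℂ}

theorem I_add_cayley (hl : l ≠ -1) : I + cayley l = 2 * I / (l + 1) := by
  have hl1 : l + 1 ≠ 0 := mt add_eq_zero_iff_eq_neg.mp hl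
  rw [cayley, eq_div_iff hl1]
  field_simp
  linear_combination (l - 1) * I_sq

theorem I_sub_cayley (hl : l ≠ -1) : I - cayley l = 2 * I * l / (l + 1) := by
  have hl1 : l + 1 ≠ 0 := mt add_eq_zero_iff_eq_neg.mp hl
  rw [cayley, eq_div_iff hl1]
  field_simp
  linear_combination (1 - l) * I_sq

theorem I_add_cayley_ne_zero (hl : l ≠ -1) : I + cayley l ≠ 0 := by
  have hl1 : l + 1 ≠ 0 := mt add_eq_zero_iff_eq_neg.mp hl
  rw [I_add_cayley hl]
  exact div_ne_zero (mul_ne_zero two_ne_zero I_ne_zero) hl1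

theorem cayley_ne_neg_I (hl : l ≠ -1) : cayley l ≠ -I := fun h =>
  I_add_cayley_ne_zero hl (by rw [h, add_neg_cancel])

theorem I_sub_cayley_div_I_add_cayley (hl : l ≠ -1) :
    (I - cayley l) / (I + cayley l) = l := by
  have hl1 : l + 1 ≠ 0 := mt add_eq_zero_iff_eq_neg.mp hl
  rw [I_sub_cayley hl, I_add_cayley hl]
  field_simp [I_ne_zero]

theorem cayley_sq_add_one (hl : l ≠ -1) : cayley l ^ 2 + 1 = -l * (I + cayley l) ^ 2 := by
  have hsub : I - cayley l = l * (I + cayley l) := by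
    rw [I_sub_cayley hl, I_add_cayley hl]; ring
  linear_combination -(I + cayley l) * hsub + I_sq

end Cayley

theorem stmt_17 (a ahat : ℂ[X])
    (r : ℝ) (hr : 0 < r) (har : a.eval (-1) = (r : ℂ))
    (hahat : ∀ κ : ℂ, κ ≠ -Complex.I →
      ahat.eval κ = ((Complex.I + κ) ^ 4 / a.eval (-1)) *
        a.eval ((Complex.I - κ) / (Complex.I + κ))) :
    ∀ l ν : ℂ, l ≠ -1 → ν ^ 2 = l * a.eval l →
      ∀ κ νhat : ℂ, κ = (l - 1) / (Complex.I * (l + 1)) →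
        νhat = Complex.I * (Complex.I + κ) ^ 3 * ν / (Real.sqrt r : ℂ) →
        νhat ^ 2 = (κ ^ 2 + 1) * ahat.eval κ := by
  intro l ν hl hν κ νhat hκ hνhat
  obtain rfl : κ = cayley l := hκ
  have hr0 : (r : ℂ) ≠ 0 := ofReal_ne_zero.mpr hr.ne'
  have hsqrt : ((Real.sqrt r : ℝ) : ℂ) ^ 2 = r := by
    exact_mod_cast Real.sq_sqrt hr.le
  rw [hνhat, hahat _ (cayley_ne_neg_I hl), I_sub_cayley_div_I_add_cayley hl, har,
    cayley_sq_add_one hl, div_pow, hsqrt, mul_pow, mul_pow, I_sq, hν]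
  field_simp
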